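/- For every positive integer s divisible by q − 1, the polynomial ζ(−s, X) := ∑_{d≥0} S_d(s) X^d ∈ (F_q[x])[X] is divisible by X − 1 but not by (X − 1)²; that is, the zeta function of F_q[x] vanishes at −s to order exactly one. -/

import Mathlib

/-!
Write `V M` for the sum of `a ^ s` over all polynomials `a` of degree `< M`. Splitting off the
coefficient of `x ^ d` and using `c ^ s = 1` for `c ≠ 0` gives `V (d + 1) = V d + (q - 1) S_d`,
i.e. `S_d = V d - V (d + 1)`, so `ζ(-s, 1)` telescopes to `-V (s + 1)`. That vanishes: in the
multinomial expansion of `(∑ cᵢ xⁱ) ^ s` over `s + 1` coefficients every monomial misses some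
`cᵢ`, and summing over that free coefficient produces the factor `q = 0`.

For the order, reduce the coefficients modulo `x`: the constant term of `S_d` is `1, -1, 0` for
`d = 0, 1, ≥ 2`, so `ζ(-s, X)` maps to `1 - X`, which `(X - 1) ^ 2` does not divide.
-/

open Polynomial

/-- `lq q k` is the sum of the base-`q` digits of `k`. -/
def lq (q k : ℕ) : ℕ := (Nat.digits q k).sum

/-- `Spow F d s = ∑_{a monic, deg a = d} a^s ∈ F[x]`, the power sum over all monic polynomials
of degree `d`, realized as the sum over all coefficient tuples `c : Fin d → F`. -/
noncomputable def Spow (F : Type*) [Field F] [Fintype F] (d s : ℕ) : F[X] :=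
  ∑ c : Fin d → F, (X ^ d + ∑ i : Fin d, C (c i) * X ^ (i : ℕ)) ^ s

open Finset

namespace FiniteField

variable {F : Type*} [Field F] [Fintype F]

lemma natCast_card_eq_zero_of_algebra (A : Type*) [Semiring A] [Algebra F A] :
    (Fintype.card F : A) = 0 := by
  rw [← map_natCast (algebraMap F A), cast_card_eq_zero, map_zero]

lemma natCast_card_sub_one_of_algebra (A : Type*) [Ring A] [Algebra F A] :
    ((Fintype.card F - 1 : ℕ) : A) = -1 := by
  rw [Nat.cast_sub Fintype.card_pos, natCast_card_eq_zero_of_algebra, Nat.cast_one, zero_sub]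

lemma pow_eq_one_of_card_sub_one_dvd {x : F} (hx : x ≠ 0) {s : ℕ}
    (h : Fintype.card F - 1 ∣ s) : x ^ s = 1 := by
  obtain ⟨t, rfl⟩ := h
  rw [pow_mul, pow_card_sub_one_eq_one x hx, one_pow]

lemma sum_pow_eq_neg_one {s : ℕ} (hs : s ≠ 0) (h : Fintype.card F - 1 ∣ s) :
    ∑ x : F, x ^ s = -1 := by
  classical
  rw [← sum_erase _ (zero_pow hs),
    sum_congr rfl fun x hx => pow_eq_one_of_card_sub_one_dvd (ne_of_mem_erase hx) h,
    sum_const, card_erase_of_mem (mem_univ _), card_univ, nsmul_one,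
    natCast_card_sub_one_of_algebra]

end FiniteField

lemma Fintype.sum_pi_sum_pow_eq_zero {ι K R : Type*} [Fintype ι] [DecidableEq ι] [Fintype K]
    [CommSemiring R] (hK : (Fintype.card K : R) = 0) (f : ι → K → R) {s : ℕ}
    (hs : s < Fintype.card ι) : ∑ c : ι → K, (∑ i, f i (c i)) ^ s = 0 := by
  simp_rw [sum_pow_eq_sum_piAntidiag]
  rw [sum_comm]
  refine Finset.sum_eq_zero fun k hk => ?_
  obtain ⟨i₀, hi₀⟩ : ∃ i, k i = 0 := by
    by_contra! hk₀
    have : Fintype.card ι ≤ ∑ i, k i := by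
      simpa using card_nsmul_le_sum univ k 1 fun i _ => Nat.one_le_iff_ne_zero.2 (hk₀ i)
    rw [(mem_piAntidiag.1 hk).1] at this
    omega
  rw [← mul_sum, ← Fintype.prod_sum (fun i x => f i x ^ k i),
    prod_eq_zero (mem_univ i₀) (by simp [hi₀, hK]), mul_zero]

section PowerSums

variable {F : Type*} [Field F] [Fintype F]

variable (F) in
noncomputable def powerSumDegreeLT (M s : ℕ) : F[X] :=
  ∑ c : Fin M → F, (∑ i : Fin M, C (c i) * X ^ (i : ℕ)) ^ s

lemma powerSumDegreeLT_eq_zero {M s : ℕ} (h : s < M) : powerSumDegreeLT F M s = 0 := by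
  exact Fintype.sum_pi_sum_pow_eq_zero (FiniteField.natCast_card_eq_zero_of_algebra F[X])
    (fun (i : Fin M) x => C x * X ^ (i : ℕ)) (by simpa using h)

lemma powerSumDegreeLT_zero_left {s : ℕ} (hs : s ≠ 0) : powerSumDegreeLT F 0 s = 0 := by
  simp [powerSumDegreeLT, hs]

/-- Rescaling all coefficients by `x` turns polynomials with leading coefficient `x` into monic
ones. -/
lemma sum_C_mul_X_pow_add_pow_eq_Spow {x : F} (hx : x ≠ 0) {d s : ℕ} (hxs : x ^ s = 1) :
    ∑ c : Fin d → F, (C x * X ^ d + ∑ i : Fin d, C (c i) * X ^ (i : ℕ)) ^ s = Spow F d s := by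
  rw [← (Equiv.piCongrRight fun _ => Equiv.mulLeft₀ x hx).sum_comp, Spow]
  refine sum_congr rfl fun c _ => ?_
  have : C x * X ^ d + ∑ i : Fin d, C (x * c i) * X ^ (i : ℕ)
      = C x * (X ^ d + ∑ i : Fin d, C (c i) * X ^ (i : ℕ)) := by
    simp only [mul_add, mul_sum, C_mul, mul_assoc]
  simp only [Equiv.piCongrRight_apply, Pi.map_apply, Equiv.mulLeft₀_apply]
  rw [this, mul_pow, ← C_pow, hxs, C_1, one_mul]

lemma powerSumDegreeLT_succ {d s : ℕ} (hdvd : Fintype.card F - 1 ∣ s) :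
    powerSumDegreeLT F (d + 1) s = powerSumDegreeLT F d s - Spow F d s := by
  classical
  have hsplit : powerSumDegreeLT F (d + 1) s
      = ∑ x : F, ∑ c : Fin d → F, (C x * X ^ d + ∑ i : Fin d, C (c i) * X ^ (i : ℕ)) ^ s := by
    rw [powerSumDegreeLT, ← (Fin.snocEquiv fun _ => F).sum_comp, Fintype.sum_prod_type]
    simp [Fin.sum_univ_castSucc, add_comm]
  have hzero : ∑ c : Fin d → F, (C 0 * X ^ d + ∑ i : Fin d, C (c i) * X ^ (i : ℕ)) ^ s
      = powerSumDegreeLT F d s := by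
    simp [powerSumDegreeLT]
  rw [hsplit, ← add_sum_erase _ _ (mem_univ 0), hzero,
    sum_congr rfl fun x hx => sum_C_mul_X_pow_add_pow_eq_Spow (ne_of_mem_erase hx)
      (FiniteField.pow_eq_one_of_card_sub_one_dvd (ne_of_mem_erase hx) hdvd),
    sum_const, card_erase_of_mem (mem_univ _), card_univ, nsmul_eq_mul,
    FiniteField.natCast_card_sub_one_of_algebra]
  ring

lemma Spow_eq_sub {d s : ℕ} (hdvd : Fintype.card F - 1 ∣ s) :
    Spow F d s = powerSumDegreeLT F d s - powerSumDegreeLT F (d + 1) s := by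
  rw [powerSumDegreeLT_succ hdvd, sub_sub_cancel]

lemma Spow_eq_zero {d s : ℕ} (hdvd : Fintype.card F - 1 ∣ s) (h : s < d) : Spow F d s = 0 := by
  rw [Spow_eq_sub hdvd, powerSumDegreeLT_eq_zero h, powerSumDegreeLT_eq_zero (by omega),
    sub_zero]

lemma sum_range_Spow {s : ℕ} (hs : s ≠ 0) (hdvd : Fintype.card F - 1 ∣ s) (n : ℕ) :
    ∑ d ∈ range n, Spow F d s = -powerSumDegreeLT F n s := by
  simp_rw [Spow_eq_sub hdvd]
  rw [sum_range_sub', powerSumDegreeLT_zero_left hs, zero_sub]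

lemma eval_zero_powerSumDegreeLT_succ (n s : ℕ) :
    eval 0 (powerSumDegreeLT F (n + 1) s) = (Fintype.card F : F) ^ n * ∑ x : F, x ^ s := by
  rw [powerSumDegreeLT, eval_finsetSum, ← (Fin.consEquiv fun _ => F).sum_comp,
    Fintype.sum_prod_type]
  simp [Fin.sum_univ_succ, eval_finsetSum, mul_sum]

lemma eval_zero_Spow {s : ℕ} (hs : s ≠ 0) (hdvd : Fintype.card F - 1 ∣ s) (d : ℕ) :
    eval 0 (Spow F d s) = if d = 0 then 1 else if d = 1 then -1 else 0 := by
  rw [Spow_eq_sub hdvd]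
  rcases d with _ | _ | d <;>
    simp [eval_zero_powerSumDegreeLT_succ, powerSumDegreeLT_zero_left hs,
      FiniteField.sum_pow_eq_neg_one hs hdvd]

lemma finsum_C_Spow_mul_X_pow {s : ℕ} (hdvd : Fintype.card F - 1 ∣ s) :
    ∑ᶠ d : ℕ, C (Spow F d s) * X ^ d = ∑ d ∈ range (s + 1), C (Spow F d s) * X ^ d := by
  refine finsum_eq_sum_of_support_subset _ fun d hd => ?_
  by_contra hds
  simp only [coe_range, Set.mem_Iio, not_lt] at hds
  exact hd (by simp [Spow_eq_zero hdvd (by omega : s < d)])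

lemma map_evalRingHom_zero_sum_C_Spow_mul_X_pow {s : ℕ} (hs : s ≠ 0)
    (hdvd : Fintype.card F - 1 ∣ s) :
    (∑ d ∈ range (s + 1), C (Spow F d s) * X ^ d).map (evalRingHom 0) = 1 - X := by
  obtain ⟨n, rfl⟩ := Nat.exists_eq_add_of_le' (Nat.one_le_iff_ne_zero.2 hs)
  simp [Polynomial.map_sum, sum_range_succ', eval_zero_Spow hs hdvd, sub_eq_neg_add]

lemma not_X_sub_one_sq_dvd_one_sub_X {R : Type*} [CommRing R] [IsDomain R] :
    ¬ (X - 1 : R[X]) ^ 2 ∣ 1 - X := by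
  intro h
  have hX : (1 - X : R[X]) = -(X - C 1) := by rw [C_1, neg_sub]
  have := natDegree_le_of_dvd h (by rw [hX, neg_ne_zero]; exact X_sub_C_ne_zero 1)
  rw [hX, natDegree_neg, natDegree_X_sub_C, ← C_1, natDegree_pow, natDegree_X_sub_C] at this
  omega

end PowerSums

/-- For every positive integer `s` divisible by `q − 1`, the polynomial
`ζ(−s, X) = ∑_{d ≥ 0} S_d(s) X^d ∈ (F_q[x])[X]` is divisible by `X − 1` but not by `(X − 1)²`;
i.e., the zeta function of `F_q[x]` vanishes at `−s` to order exactly one. -/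
theorem statement5 (F : Type*) [Field F] [Fintype F] (q : ℕ) (hq : q = Fintype.card F)
    (s : ℕ) (hs : 1 ≤ s) (hdvd : (q - 1) ∣ s) :
    (X - 1 : Polynomial F[X]) ∣ (∑ᶠ d : ℕ, C (Spow F d s) * X ^ d) ∧
      ¬ (X - 1 : Polynomial F[X]) ^ 2 ∣ (∑ᶠ d : ℕ, C (Spow F d s) * X ^ d) := by
  subst hq
  have hs₀ : s ≠ 0 := by omega
  rw [finsum_C_Spow_mul_X_pow hdvd]
  constructor
  · rw [← C_1, dvd_iff_isRoot, IsRoot, eval_finsetSum]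
    simp only [eval_mul, eval_C, eval_pow, eval_X, one_pow, mul_one]
    rw [sum_range_Spow hs₀ hdvd, powerSumDegreeLT_eq_zero (Nat.lt_succ_self s), neg_zero]
  · intro h
    have := map_dvd (mapRingHom (evalRingHom (0 : F))) h
    rw [coe_mapRingHom, map_evalRingHom_zero_sum_C_Spow_mul_X_pow hs₀ hdvd, Polynomial.map_pow,
      Polynomial.map_sub, map_X, Polynomial.map_one] at this
    exact not_X_sub_one_sq_dvd_one_sub_X this
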